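/- Lemma (Case (ii), upper bound). Suppose Assumptions 1 and 2 hold, let E ∈ ℝ, and let e* ∈ D(E) minimize d_l + d_u over D(E). If E + δ·Σ_j p̄_j > Σ_j ē'_j, then Σ_j min(ē'_j, e*_j + δ·p̄_j) = Σ_j ē'_j; equivalently, e*_j + δ·p̄_j ≥ ē'_j for every j. -/

import Mathlib

/-!
If some device `k` could still absorb more energy (`e*_k + δ p̄_k < ē'_k`), then, since the total
`E + δ Σ p̄_j` exceeds `Σ ē'_j`, some other device `i` overshoots (`e*_i + δ p̄_i > ē'_i`).
Moving the smaller of the two gaps, `ε`, from `i` to `k` strictly lowers the upper cost `d_u` by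
`ε` and does not raise the lower cost `d_l`. The moved point stays in `D(E)`, and `e_i + δ p̲_i`
stays above `e̲'_i`, because Assumption 2(a) at `i` provides an `e ≥ e̲_i` with
`e + δ p̄_i ≤ ē'_i`, hence `e ≤ e*_i - ε`, and Assumption 2(b) at `k` gives `e*_k + ε ≤ ē_k`.
This contradicts the minimality of `e*`.
-/

open Finset

section Transfer

variable {ι : Type*} [DecidableEq ι]

def transfer (x : ι → ℝ) (i k : ι) (ε : ℝ) : ι → ℝ :=
  x + Pi.single k ε - Pi.single i ε

variable (x : ι → ℝ) {i k j : ι} (ε : ℝ)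

theorem sum_transfer [Fintype ι] : ∑ j, transfer x i k ε j = ∑ j, x j := by
  simp [transfer, sum_sub_distrib, sum_add_distrib]

theorem transfer_apply_left (hik : i ≠ k) : transfer x i k ε i = x i - ε := by
  simp [transfer, hik]

theorem transfer_apply_right (hik : i ≠ k) : transfer x i k ε k = x k + ε := by
  simp [transfer, hik.symm]

theorem transfer_apply_of_ne (hji : j ≠ i) (hjk : j ≠ k) : transfer x i k ε j = x j := by
  simp [transfer, hji, hjk]

theorem transfer_mem_box {lo hi : ι → ℝ} (hik : i ≠ k) (hε : 0 ≤ ε)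
    (hx : ∀ j, lo j ≤ x j ∧ x j ≤ hi j) (hsrc : lo i ≤ x i - ε)
    (htgt : x k + ε ≤ hi k) :
    ∀ j, lo j ≤ transfer x i k ε j ∧ transfer x i k ε j ≤ hi j := by
  intro j
  by_cases hji : j = i
  · subst hji
    rw [transfer_apply_left x ε hik]
    exact ⟨hsrc, by linarith [hx j]⟩
  by_cases hjk : j = k
  · subst hjk
    rw [transfer_apply_right x ε hik]
    exact ⟨by linarith [hx j], htgt⟩
  · rw [transfer_apply_of_ne x ε hji hjk]
    exact hx j

end Transfer

theorem antitone_max_sub_self (a : ℝ) : Antitone fun y : ℝ => max y a - y := by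
  intro y z hyz
  have hy := le_max_left y a
  have ha := le_max_right y a
  have : max z a ≤ max y a + (z - y) := max_le (by linarith) (by linarith)
  dsimp only
  linarith

section Cost

variable {ι : Type*} [Fintype ι]

/-- `d_l` with the offsets `c j = δ * p̲_j` and lower targets `lo j = e̲'_j`. -/
def lowerCost (c lo x : ι → ℝ) : ℝ :=
  ∑ j, (max (x j + c j) (lo j) - (x j + c j))

/-- `d_u` with the offsets `c j = δ * p̄_j` and upper targets `hi j = ē'_j`. -/
def upperCost (c hi x : ι → ℝ) : ℝ :=
  ∑ j, ((x j + c j) - min (x j + c j) (hi j))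

variable [DecidableEq ι] (c x : ι → ℝ) {i k : ι} {ε : ℝ}

theorem lowerCost_transfer_le (lo : ι → ℝ) (hik : i ≠ k) (hε : 0 ≤ ε)
    (hsrc : lo i ≤ x i - ε + c i) :
    lowerCost c lo (transfer x i k ε) ≤ lowerCost c lo x := by
  refine sum_le_sum fun j _ => ?_
  by_cases hji : j = i
  · subst hji
    rw [transfer_apply_left x ε hik, max_eq_left hsrc, max_eq_left (by linarith)]
    simp
  by_cases hjk : j = k
  · subst hjk
    rw [transfer_apply_right x ε hik]
    exact antitone_max_sub_self (lo j) (by linarith)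
  · rw [transfer_apply_of_ne x ε hji hjk]

theorem upperCost_transfer_lt (hi : ι → ℝ) (hik : i ≠ k) (hε : 0 < ε)
    (hsrc : hi i ≤ x i - ε + c i) (htgt : x k + ε + c k ≤ hi k) :
    upperCost c hi (transfer x i k ε) < upperCost c hi x := by
  have hsrc' : hi i ≤ x i + c i := by linarith
  have htgt' : x k + c k ≤ hi k := by linarith
  refine sum_lt_sum (fun j _ => ?_) ⟨i, mem_univ i, ?_⟩
  · by_cases hji : j = i
    · subst hji
      rw [transfer_apply_left x ε hik, min_eq_right hsrc, min_eq_right hsrc']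
      linarith
    by_cases hjk : j = k
    · subst hjk
      rw [transfer_apply_right x ε hik, min_eq_left htgt, min_eq_left htgt', sub_self,
        sub_self]
    · rw [transfer_apply_of_ne x ε hji hjk]
  · rw [transfer_apply_left x ε hik, min_eq_right hsrc, min_eq_right hsrc']
    linarith

end Cost

theorem case_ii_upper_bound_general
    (N : ℕ) (δ : ℝ)
    (plb pub elb eub elb' eub' : Fin N → ℝ)
    -- Assumption 2(a)
    (hA2a : ∀ j, ∃ e : ℝ, elb j ≤ e ∧ e ≤ eub j ∧
      elb' j ≤ e + δ * plb j ∧ e + δ * pub j ≤ eub' j)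
    -- Assumption 2(b)
    (hA2b : ∀ j, elb j + δ * plb j ≤ elb' j ∧ eub' j ≤ eub j + δ * pub j)
    (E : ℝ) (estar : Fin N → ℝ)
    -- e* ∈ D(E)
    (hmem : (∀ j, elb j ≤ estar j ∧ estar j ≤ eub j) ∧ ∑ j, estar j = E)
    -- e* minimizes d_l + d_u over D(E)
    (hmin : ∀ e : Fin N → ℝ,
      ((∀ j, elb j ≤ e j ∧ e j ≤ eub j) ∧ ∑ j, e j = E) →
      ((∑ j, (max (estar j + δ * plb j) (elb' j) - (estar j + δ * plb j))) +
       (∑ j, ((estar j + δ * pub j) - min (estar j + δ * pub j) (eub' j)))) ≤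
      ((∑ j, (max (e j + δ * plb j) (elb' j) - (e j + δ * plb j))) +
       (∑ j, ((e j + δ * pub j) - min (e j + δ * pub j) (eub' j)))))
    -- case hypothesis
    (hcase : E + δ * ∑ j, pub j > ∑ j, eub' j) :
    (∑ j, min (eub' j) (estar j + δ * pub j) = ∑ j, eub' j) ∧
    (∀ j, estar j + δ * pub j ≥ eub' j) := by
  obtain ⟨hbox, hsum⟩ := hmem
  have saturated : ∀ j, eub' j ≤ estar j + δ * pub j := by
    by_contra! ⟨k, hk⟩
    obtain ⟨i, -, hi⟩ : ∃ i ∈ univ, eub' i < estar i + δ * pub i := by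
      refine exists_lt_of_sum_lt ?_
      rwa [sum_add_distrib, ← mul_sum, hsum]
    have hik : i ≠ k := by rintro rfl; linarith
    set ε := min (estar i + δ * pub i - eub' i) (eub' k - (estar k + δ * pub k))
    have hε : 0 < ε := lt_min (by linarith) (by linarith)
    have hε_i : ε ≤ estar i + δ * pub i - eub' i := min_le_left _ _
    have hε_k : ε ≤ eub' k - (estar k + δ * pub k) := min_le_right _ _
    obtain ⟨w, hw_lo, -, hw_lo', hw_hi'⟩ := hA2a i
    have hle := hmin (transfer estar i k ε)
      ⟨transfer_mem_box estar ε hik hε.le hbox (by linarith) (by linarith [hA2b k]),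
        (sum_transfer estar ε).trans hsum⟩
    refine hle.not_gt (add_lt_add_of_le_of_lt ?_ ?_)
    · exact lowerCost_transfer_le (fun j => δ * plb j) estar elb' hik hε.le (by linarith)
    · exact upperCost_transfer_lt (fun j => δ * pub j) estar eub' hik hε (by linarith)
        (by linarith)
  exact ⟨sum_congr rfl fun j _ => min_eq_left (saturated j), saturated⟩

/-- Lemma 3(b) (Case (ii), upper bound). -/
theorem case_ii_upper_bound
    (N : ℕ) (hN : 1 ≤ N) (δ : ℝ) (hδ : 0 < δ)
    (plb pub elb eub elb' eub' : Fin N → ℝ)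
    (hp : ∀ j, plb j ≤ pub j) (he : ∀ j, elb j ≤ eub j)
    (he' : ∀ j, elb' j ≤ eub' j)
    -- Assumption 1 (consistency of constraints)
    (hA1 : ∀ j, ∀ e : ℝ, elb j ≤ e → e ≤ eub j →
      max (elb' j) (e + δ * plb j) ≤ min (eub' j) (e + δ * pub j))
    -- Assumption 2(a)
    (hA2a : ∀ j, ∃ e : ℝ, elb j ≤ e ∧ e ≤ eub j ∧
      elb' j ≤ e + δ * plb j ∧ e + δ * pub j ≤ eub' j)
    -- Assumption 2(b)
    (hA2b : ∀ j, elb j + δ * plb j ≤ elb' j ∧ eub' j ≤ eub j + δ * pub j)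
    (E : ℝ) (estar : Fin N → ℝ)
    -- e* ∈ D(E)
    (hmem : (∀ j, elb j ≤ estar j ∧ estar j ≤ eub j) ∧ ∑ j, estar j = E)
    -- e* minimizes d_l + d_u over D(E)
    (hmin : ∀ e : Fin N → ℝ,
      ((∀ j, elb j ≤ e j ∧ e j ≤ eub j) ∧ ∑ j, e j = E) →
      ((∑ j, (max (estar j + δ * plb j) (elb' j) - (estar j + δ * plb j))) +
       (∑ j, ((estar j + δ * pub j) - min (estar j + δ * pub j) (eub' j)))) ≤
      ((∑ j, (max (e j + δ * plb j) (elb' j) - (e j + δ * plb j))) +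
       (∑ j, ((e j + δ * pub j) - min (e j + δ * pub j) (eub' j)))))
    -- case hypothesis
    (hcase : E + δ * ∑ j, pub j > ∑ j, eub' j) :
    (∑ j, min (eub' j) (estar j + δ * pub j) = ∑ j, eub' j) ∧
    (∀ j, estar j + δ * pub j ≥ eub' j) :=
  case_ii_upper_bound_general N δ plb pub elb eub elb' eub' hA2a hA2b E estar hmem hmin hcase
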